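/- arXiv:1307.0925 — 2 statements merged into one kernel-verified Lean document; each statement's English description precedes it below -/
import Mathlib

section
/- There exist constants c₁, c₂ > 0 and λ₀ > 0 such that for every λ ∈ (0, λ₀): c₁·λ² ≤ 1 − (log φ)/d(λ) ≤ c₂·λ². -/
open scoped Real
noncomputable section

/-- The traces `x_k(E)` (shifted index: `xFun lam (k+2) = x_k`), defined by
`x_{-2} = 1`, `x_{-1} = E/2`, `x_0 = (E-λ)/2` and `x_{k+1} = 2 x_k x_{k-1} - x_{k-2}`. -/
def xFun (lam : ℝ) : ℕ → ℝ → ℝ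
  | 0 => fun _ => 1
  | 1 => fun E => E / 2
  | 2 => fun E => (E - lam) / 2
  | (n + 3) => fun E => 2 * xFun lam (n + 2) E * xFun lam (n + 1) E - xFun lam n E

/-- The trace `x_k` for `k ≥ 0`. -/
def xTrace (lam : ℝ) (k : ℕ) : ℝ → ℝ := xFun lam (k + 2)

/-- `d(λ) = (1/6) log((λ⁴/2 + 4λ² + 9) + (4+λ²) √(λ⁴/2 + 2λ² + 5))`. -/
def dFun (lam : ℝ) : ℝ :=
  (1 / 6) * Real.log ((lam ^ 4 / 2 + 4 * lam ^ 2 + 9) +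
    (4 + lam ^ 2) * Real.sqrt (lam ^ 4 / 2 + 2 * lam ^ 2 + 5))

def goldenPhi : ℝ := (Real.sqrt 5 + 1) / 2

set_option maxHeartbeats 1000000 in
/-- Quadratic asymptotics: `λ² ≲ 1 - (log φ)/d(λ) ≲ λ²` for small `λ > 0`. -/
theorem dFun_quadratic_asymptotics :
    ∃ c1 > (0 : ℝ), ∃ c2 > (0 : ℝ), ∃ lam0 > (0 : ℝ),
      ∀ lam ∈ Set.Ioo (0 : ℝ) lam0,
        c1 * lam ^ 2 ≤ 1 - Real.log goldenPhi / dFun lam ∧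
        1 - Real.log goldenPhi / dFun lam ≤ c2 * lam ^ 2 := by
  refine ⟨1/48, by norm_num, 1, by norm_num, 1, by norm_num, ?_⟩
  rintro lam ⟨hl0, hl1⟩
  have hs5nn : (0:ℝ) ≤ Real.sqrt 5 := Real.sqrt_nonneg 5
  have h5 : Real.sqrt 5 ^ 2 = 5 := Real.sq_sqrt (by norm_num)
  have hs5lb : (2.2:ℝ) ≤ Real.sqrt 5 := by nlinarith
  have hs5ub : Real.sqrt 5 ≤ 2.25 := by nlinarith
  set s5 := Real.sqrt 5 with hs5def
  set t := lam ^ 2 with htdef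
  have ht0 : 0 < t := by positivity
  have ht1 : t ≤ 1 := by nlinarith
  -- bounds on sqrt C
  have hCeq : lam ^ 4 / 2 + 2 * lam ^ 2 + 5 = t ^ 2 / 2 + 2 * t + 5 := by ring
  have hsC_lb : s5 + t / 3 ≤ Real.sqrt (lam ^ 4 / 2 + 2 * lam ^ 2 + 5) := by
    rw [show s5 + t / 3 = Real.sqrt ((s5 + t / 3) ^ 2) from
      (Real.sqrt_sq (by positivity)).symm]
    apply Real.sqrt_le_sqrt
    rw [hCeq]; nlinarith
  have hsC_ub : Real.sqrt (lam ^ 4 / 2 + 2 * lam ^ 2 + 5) ≤ s5 + 0.7 * t := by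
    rw [show s5 + 0.7 * t = Real.sqrt ((s5 + 0.7 * t) ^ 2) from
      (Real.sqrt_sq (by positivity)).symm]
    apply Real.sqrt_le_sqrt
    rw [hCeq]; nlinarith
  set S := (lam ^ 4 / 2 + 4 * lam ^ 2 + 9) +
    (4 + lam ^ 2) * Real.sqrt (lam ^ 4 / 2 + 2 * lam ^ 2 + 5) with hSdef
  clear_value s5 t S
  have hS_lb : 9 + 4 * s5 + 4 * t ≤ S := by
    have h := mul_le_mul_of_nonneg_left hsC_lb (by positivity : (0:ℝ) ≤ 4 + lam ^ 2)
    rw [hSdef]; nlinarith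
  have hS_ub : S ≤ 9 + 4 * s5 + 11 * t := by
    have h := mul_le_mul_of_nonneg_left hsC_ub (by positivity : (0:ℝ) ≤ 4 + lam ^ 2)
    rw [hSdef]; nlinarith
  have hS0lb : (17:ℝ) ≤ 9 + 4 * s5 := by linarith
  have hS0ub : 9 + 4 * s5 ≤ 18 := by linarith
  have hS0pos : (0:ℝ) < 9 + 4 * s5 := by linarith
  have hSpos : (0:ℝ) < S := by linarith
  have hSub29 : S ≤ 29 := by linarith
  -- golden ratio facts
  have hφpos : (0:ℝ) < goldenPhi := by rw [goldenPhi]; positivity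
  have hphi6 : goldenPhi ^ 6 = 9 + 4 * s5 := by
    rw [goldenPhi, hs5def]
    linear_combination ((Real.sqrt 5 ^ 4 + 6 * Real.sqrt 5 ^ 3 + 20 * Real.sqrt 5 ^ 2 +
      50 * Real.sqrt 5 + 115) / 64) * Real.sq_sqrt (by norm_num : (0:ℝ) ≤ 5)
  have hlogphi : Real.log goldenPhi = Real.log (9 + 4 * s5) / 6 := by
    rw [← hphi6, Real.log_pow]; push_cast; ring
  -- log bounds
  have hLub : Real.log S - Real.log (9 + 4 * s5) ≤ 11 * t / 17 := by
    have h1 : Real.log S - Real.log (9 + 4 * s5) = Real.log (S / (9 + 4 * s5)) := by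
      rw [Real.log_div hSpos.ne' hS0pos.ne']
    have h2 := Real.log_le_sub_one_of_pos (div_pos hSpos hS0pos)
    have h3 : S / (9 + 4 * s5) - 1 ≤ 11 * t / 17 := by
      rw [div_sub_one hS0pos.ne', div_le_div_iff₀ hS0pos (by norm_num : (0:ℝ) < 17)]
      nlinarith
    linarith
  have hLlb : t / 8 ≤ Real.log S - Real.log (9 + 4 * s5) := by
    have h1 : Real.log (9 + 4 * s5) - Real.log S = Real.log ((9 + 4 * s5) / S) := by
      rw [Real.log_div hS0pos.ne' hSpos.ne']
    have h2 := Real.log_le_sub_one_of_pos (div_pos hS0pos hSpos)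
    have h3 : (9 + 4 * s5) / S - 1 ≤ -(t / 8) := by
      rw [div_sub_one hSpos.ne', div_le_iff₀ hSpos]
      have hm : t / 8 * S ≤ t / 8 * 29 :=
        mul_le_mul_of_nonneg_left hSub29 (by positivity)
      linarith
    linarith
  -- d facts
  have hd_eq : dFun lam = Real.log S / 6 := by rw [dFun, hSdef]; ring
  have hdiff_lb : t / 48 ≤ dFun lam - Real.log goldenPhi := by
    rw [hd_eq, hlogphi]; linarith
  have hdiff_ub : dFun lam - Real.log goldenPhi ≤ 11 * t / 102 := by
    rw [hd_eq, hlogphi]; linarith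
  have hlogφ_ub : Real.log goldenPhi ≤ 0.625 := by
    have h := Real.log_le_sub_one_of_pos hφpos
    have : goldenPhi ≤ 1.625 := by rw [goldenPhi]; linarith
    linarith
  have hlogφ_lb : (1:ℝ)/3 ≤ Real.log goldenPhi := by
    have h := Real.log_le_sub_one_of_pos (inv_pos.mpr hφpos)
    rw [Real.log_inv] at h
    have h16 : (1.6:ℝ) ≤ goldenPhi := by rw [goldenPhi]; linarith
    have hinv : goldenPhi⁻¹ ≤ (1.6:ℝ)⁻¹ := by
      apply inv_anti₀ (by norm_num) h16
    norm_num at hinv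
    linarith
  have hd_pos : (0:ℝ) < dFun lam := by linarith
  have hd_ub : dFun lam ≤ 1 := by linarith
  have hd_lb : (1:ℝ)/3 ≤ dFun lam := by linarith
  have key : 1 - Real.log goldenPhi / dFun lam =
      (dFun lam - Real.log goldenPhi) / dFun lam := by
    field_simp
  rw [key]
  constructor
  · rw [le_div_iff₀ hd_pos]; nlinarith
  · rw [div_le_iff₀ hd_pos]; nlinarith
end
end

section
/- For every a ∈ ℝ, the 3×3 real matrix with rows (16a⁴ − 4a² + 1, 8a³, 0), (8a³, 4a² + 1, 0), (0, 0, 1) has eigenvalues exactly 1, 8a⁴ + 1 + 4a²·√(4a⁴ + 1), and 8a⁴ + 1 − 4a²·√(4a⁴ + 1); equivalently, its characteristic polynomial is (t − 1)·(t − (8a⁴ + 1 + 4a²√(4a⁴+1)))·(t − (8a⁴ + 1 − 4a²√(4a⁴+1))). -/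
open Polynomial

noncomputable section

/-!
The matrix is block diagonal: the `2 × 2` block has trace `16a⁴ + 2` and determinant `1`, so its
eigenvalues are the roots `8a⁴ + 1 ± 4a²√(4a⁴ + 1)` of `t² - (16a⁴ + 2)t + 1`, and the remaining
eigenvalue is `1`.
-/

lemma Polynomial.X_sub_C_mul_X_sub_C {R : Type*} [CommRing R] (u v : R) :
    (X - C u) * (X - C v) = X ^ 2 - C (u + v) * X + C (u * v) := by
  simp only [map_add, map_mul]
  ring

namespace Matrix

lemma charpoly_fin_three_of_block {R : Type*} [CommRing R] (p q q' r s : R) :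
    (!![p, q, 0; q', r, 0; 0, 0, s] : Matrix (Fin 3) (Fin 3) R).charpoly =
      (X - C s) * (X ^ 2 - C (p + r) * X + C (p * r - q * q')) := by
  rw [charpoly, det_fin_three]
  simp only [Fin.isValue, charmatrix_apply_eq, of_apply, cons_val', cons_val_zero, cons_val_fin_one,
    cons_val_one, cons_val, ne_eq, Fin.reduceEq, not_false_eq_true, charmatrix_apply_ne, map_zero,
    neg_zero, mul_zero, sub_zero, zero_ne_one, one_ne_zero, mul_neg, neg_mul, neg_neg, add_zero,
    zero_mul, map_add, map_sub, map_mul]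
  ring

lemma spectrum_eq_of_charpoly_eq_prod {K n : Type*} [Field K] [Fintype n] [DecidableEq n]
    {A : Matrix n n K} {s : Multiset K} (h : A.charpoly = (s.map fun μ ↦ X - C μ).prod) :
    spectrum K A = {μ | μ ∈ s} := by
  ext μ
  simp [mem_spectrum_iff_isRoot_charpoly, h, eval_multiset_prod, Multiset.prod_eq_zero_iff,
    sub_eq_zero]

end Matrix

/-- The spectrum of the Jacobian matrix of `T⁶` at `(0,0,a)` is
`{1, 8a⁴+1+4a²√(4a⁴+1), 8a⁴+1-4a²√(4a⁴+1)}`; equivalently, its characteristic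
polynomial factors accordingly. -/
theorem jacobian_eigenvalues (a : ℝ) :
    let M : Matrix (Fin 3) (Fin 3) ℝ :=
      !![16 * a ^ 4 - 4 * a ^ 2 + 1, 8 * a ^ 3, 0;
         8 * a ^ 3, 4 * a ^ 2 + 1, 0;
         0, 0, 1]
    let μp : ℝ := 8 * a ^ 4 + 1 + 4 * a ^ 2 * Real.sqrt (4 * a ^ 4 + 1)
    let μm : ℝ := 8 * a ^ 4 + 1 - 4 * a ^ 2 * Real.sqrt (4 * a ^ 4 + 1)
    spectrum ℝ M = {1, μp, μm} ∧
    M.charpoly = (X - C 1) * (X - C μp) * (X - C μm) := by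
  intro M μp μm
  have hsqrt : Real.sqrt (4 * a ^ 4 + 1) ^ 2 = 4 * a ^ 4 + 1 := Real.sq_sqrt (by positivity)
  have htrace : 16 * a ^ 4 - 4 * a ^ 2 + 1 + (4 * a ^ 2 + 1) = μp + μm := by ring
  have hdet : (16 * a ^ 4 - 4 * a ^ 2 + 1) * (4 * a ^ 2 + 1) - 8 * a ^ 3 * (8 * a ^ 3) = μp * μm := by
    linear_combination (16 * a ^ 4) * hsqrt
  have hchar : M.charpoly = (X - C 1) * (X - C μp) * (X - C μm) := by
    rw [Matrix.charpoly_fin_three_of_block, htrace, hdet, ← X_sub_C_mul_X_sub_C, mul_assoc]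
  refine ⟨?_, hchar⟩
  rw [Matrix.spectrum_eq_of_charpoly_eq_prod (s := {1, μp, μm}) (by simp [hchar, mul_assoc])]
  ext μ
  simp
end
end
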